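/- Let r ∈ {0,…,5} and let ℓ*₁ ≥ ⋯ ≥ ℓ*_r satisfy 0.01 ≤ ℓ*_s ≤ 0.5+ε₁. Let χ = [a₁ − ε₁/2, a₂ + ε₁/2] ⊆ [0,1], let ρ > 0 and b₁, b₂ ∈ [0,1]. Assume one of the following conditions: (A) ℓ*₁+⋯+ℓ*_r ≤ a₂ and 1−ρ ≥ a₁; (B) for some k ∈ {2,…,r}, ℓ*₁+⋯+ℓ*_{k−1} ≤ a₂, ℓ*_k ≤ b₁ and 1−ρ−(r−k+1)b₁ ≥ a₁; (C) ℓ*₂+⋯+ℓ*_r ≤ a₂, ℓ*₁ ≤ b₂ and 1−ρ−b₂ ≥ a₁; (D) a₁ ≥ 0.5+ε₁, ℓ*₁+⋯+ℓ*_r ≤ 1−ρ−(2a₁−1), and ℓ*₁+⋯+ℓ*_k ∈ [1−a₂−(2a₁−1), a₂] for some k; (E) there exists S ⊆ {1,…,r} with ∑_{s∈S} ℓ*_s ∈ [a₁,a₂]. For conditions (A)–(D) additionally assume a₂ − a₁ ≥ β. Then: if {ℓ_i}_{i=1}^j ∈ Ξ⋆(ℓ*₁,…,ℓ*_r,β)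 and ℓ_i ≤ ρ for every i ∈ {1,…,j}, there exists I_χ ⊆ {1,…,j} with ∑_{i∈I_χ} ℓ_i ∈ χ. Alternatively, if some S ⊆ {1,…,r} satisfies ∑_{s∈S} ℓ*_s ∈ [a₁,a₂] and {ℓ_i}_{i=1}^j ∈ Ξ⋆⋆(ℓ*₁,…,ℓ*_r), then there exists I_χ ⊆ {1,…,j} with ∑_{i∈I_χ} ℓ_i ∈ χ. -/

import Mathlib

open scoped Classical BigOperators

noncomputable section

/-- Membership of the sequence `ℓ` in `Ξ⋆(ℓ*₁,…,ℓ*_r, β)`. -/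
def XiStar {r : ℕ} (ε : ℝ) (ℓstar : Fin r → ℝ) (β : ℝ) {j : ℕ} (ℓ : Fin j → ℝ) : Prop :=
  (∀ i, ℓ i ∈ Set.Icc (0 : ℝ) 1) ∧ (∑ i, ℓ i) = 1 ∧ j ≤ 10 ^ 20 ∧
  ∃ X : Fin r → Finset (Fin j),
    (∀ s t, s ≠ t → Disjoint (X s) (X t)) ∧
    (∀ s : Fin r, (∑ i ∈ X s, ℓ i) ∈
      Set.Icc (ℓstar s - ε / 10 ^ 100) (ℓstar s + ε / 10 ^ 100)) ∧
    ∃ E : Finset (Fin j), E.card ≤ 1 ∧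
      ∀ i : Fin j, (∀ s, i ∉ X s) → i ∉ E → ℓ i ≤ β + ε / 10 ^ 100

/-- Membership of the sequence `ℓ` in `Ξ⋆⋆(ℓ*₁,…,ℓ*_r)`. -/
def XiStarStar {r : ℕ} (ε : ℝ) (ℓstar : Fin r → ℝ) {j : ℕ} (ℓ : Fin j → ℝ) : Prop :=
  (∀ i, ℓ i ∈ Set.Icc (0 : ℝ) 1) ∧ (∑ i, ℓ i) = 1 ∧ j ≤ 10 ^ 20 ∧
  ∃ X : Fin r → Finset (Fin j),
    (∀ s t, s ≠ t → Disjoint (X s) (X t)) ∧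
    (∀ s : Fin r, (∑ i ∈ X s, ℓ i) ∈
      Set.Icc (ℓstar s - ε / 10 ^ 100) (ℓstar s + ε / 10 ^ 100))

/-!
Greedy filling. Start from a union of blocks `X s` whose sum is at most the right end of `χ` and
add the small pieces (those outside every block, except for the one exceptional piece) one at a
time. Each small piece is at most `β + ε / 10 ^ 100`, which is less than the length of `χ`, so the
running sum cannot jump over `χ`; conditions (A)–(C) say exactly that the chosen blocks together
with all small pieces reach the left end of `χ`. Under (D) the first blocks either reach `1 - a₁`,
and we fill on top of them, or they do not, and we fill into `1 - χ` and take the complement.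
Under (E) the blocks indexed by `S` already land in `χ`, as at most five block errors of size
`ε / 10 ^ 100` fit into `ε / 10 ^ 5 / 2`.
-/

open Finset

section Greedy

variable {α : Type*} [DecidableEq α] {ℓ : α → ℝ} {L H : ℝ}

theorem exists_sum_mem_Icc_of_forall_le_sub (T : Finset α) (hT : ∀ i ∈ T, ℓ i ≤ H - L)
    (B : Finset α) (hBT : Disjoint B T) (hB : ∑ i ∈ B, ℓ i ≤ H)
    (hL : L ≤ ∑ i ∈ B ∪ T, ℓ i) :
    ∃ I : Finset α, ∑ i ∈ I, ℓ i ∈ Set.Icc L H := by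
  induction T using Finset.induction_on generalizing B with
  | empty => exact ⟨B, by simpa using hL, hB⟩
  | @insert a T ha ih =>
    by_cases hBL : L ≤ ∑ i ∈ B, ℓ i
    · exact ⟨B, hBL, hB⟩
    have haB : a ∉ B := fun h => disjoint_left.1 hBT h (mem_insert_self a T)
    refine ih (fun i hi => hT i (mem_insert_of_mem hi)) (insert a B) ?_ ?_ ?_
    · rw [disjoint_insert_left]
      exact ⟨ha, hBT.mono_right (subset_insert a T)⟩
    · rw [sum_insert haB]
      linarith [hT a (mem_insert_self a T)]
    · rwa [insert_union, ← union_insert]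

theorem exists_sum_mem_Icc_of_small_outside [Fintype α] (hℓ : ∀ i, 0 ≤ ℓ i) {B R : Finset α}
    (hsmall : ∀ i, i ∉ B → i ∉ R → ℓ i ≤ H - L) (hB : ∑ i ∈ B, ℓ i ≤ H)
    (hR : L ≤ ∑ i, ℓ i - ∑ i ∈ R, ℓ i) :
    ∃ I : Finset α, ∑ i ∈ I, ℓ i ∈ Set.Icc L H := by
  have hsub : (B ∪ (B ∪ R)ᶜ)ᶜ ⊆ R := by
    intro i
    simp only [mem_compl, mem_union, not_or]
    tauto
  have hcompl := sum_le_sum_of_subset_of_nonneg hsub (fun i _ _ => hℓ i)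
  refine exists_sum_mem_Icc_of_forall_le_sub (B ∪ R)ᶜ (fun i hi => ?_) B ?_ hB ?_
  · simp only [mem_compl, mem_union, not_or] at hi
    exact hsmall i hi.1 hi.2
  · exact disjoint_left.2 fun i hiB hi => (mem_compl.1 hi) (mem_union_left R hiB)
  · linarith [sum_add_sum_compl (B ∪ (B ∪ R)ᶜ) ℓ]

end Greedy

theorem sum_biUnion_mem_Icc {ι α : Type*} [DecidableEq α] {ℓ : α → ℝ} {ℓs : ι → ℝ}
    {X : ι → Finset α} {S : Finset ι} {δ : ℝ} {n : ℕ} (hX : (S : Set ι).PairwiseDisjoint X)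
    (hXS : ∀ s ∈ S, ∑ i ∈ X s, ℓ i ∈ Set.Icc (ℓs s - δ) (ℓs s + δ))
    (hS : S.card ≤ n) (hδ : 0 ≤ δ) :
    ∑ i ∈ S.biUnion X, ℓ i ∈ Set.Icc (∑ s ∈ S, ℓs s - n * δ) (∑ s ∈ S, ℓs s + n * δ) := by
  rw [← Set.mem_Icc_iff_abs_le, sum_biUnion hX, ← sum_sub_distrib]
  calc |∑ s ∈ S, (ℓs s - ∑ i ∈ X s, ℓ i)|
      ≤ ∑ s ∈ S, |ℓs s - ∑ i ∈ X s, ℓ i| := abs_sum_le_sum_abs _ _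
    _ ≤ ∑ _s ∈ S, δ := sum_le_sum fun s hs => Set.mem_Icc_iff_abs_le.2 (hXS s hs)
    _ ≤ n * δ := by
      rw [sum_const, nsmul_eq_mul]
      exact mul_le_mul_of_nonneg_right (by exact_mod_cast hS) hδ

theorem sum_compl_filter_lt_le {r k : ℕ} {ℓs : Fin r → ℝ} {b : ℝ} (hℓs : Antitone ℓs)
    (hk : 1 ≤ k) (hkr : k ≤ r) (hb : ∀ i : Fin r, (i : ℕ) = k - 1 → ℓs i ≤ b) :
    ∑ s ∈ (univ.filter fun i : Fin r => (i : ℕ) < k - 1)ᶜ, ℓs s ≤ ((r : ℝ) - k + 1) * b := by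
  set i₀ : Fin r := ⟨k - 1, by omega⟩
  have htail : (univ.filter fun i : Fin r => (i : ℕ) < k - 1)ᶜ = Ici i₀ := by
    ext i
    simp [i₀, Fin.le_def]
  have hcard : ((Ici i₀).card : ℝ) = (r : ℝ) - k + 1 := by
    rw [Fin.card_Ici, show r - (k - 1) = r - k + 1 by omega]
    push_cast [Nat.cast_sub hkr]
    ring
  rw [htail, ← hcard, ← nsmul_eq_mul]
  exact sum_le_card_nsmul _ _ _ fun i hi => (hℓs (mem_Ici.1 hi)).trans (hb i₀ rfl)

theorem sum_compl_filter_one_le_le {r : ℕ} {ℓs : Fin r → ℝ} {b : ℝ} (hb₀ : 0 ≤ b)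
    (hb : ∀ i : Fin r, (i : ℕ) = 0 → ℓs i ≤ b) :
    ∑ s ∈ (univ.filter fun i : Fin r => 1 ≤ (i : ℕ))ᶜ, ℓs s ≤ b := by
  have hzero : ∀ i ∈ (univ.filter fun i : Fin r => 1 ≤ (i : ℕ))ᶜ, (i : ℕ) = 0 := by
    intro i hi
    simpa using hi
  have hcard : (univ.filter fun i : Fin r => 1 ≤ (i : ℕ))ᶜ.card ≤ 1 :=
    card_le_one.2 fun i hi i' hi' => Fin.ext ((hzero i hi).trans (hzero i' hi').symm)
  calc _ ≤ _ • b := sum_le_card_nsmul _ _ _ fun i hi => hb i (hzero i hi)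
    _ ≤ 1 • b := nsmul_le_nsmul_left hb₀ hcard
    _ = b := one_nsmul b

section Xi

variable {ε β ρ a₁ a₂ : ℝ} {r j : ℕ} {ℓs : Fin r → ℝ} {ℓ : Fin j → ℝ}

theorem XiStar.xiStarStar (hℓ : XiStar ε ℓs β ℓ) : XiStarStar ε ℓs ℓ :=
  let ⟨h01, hsum, hj, X, hXd, hX, _⟩ := hℓ
  ⟨h01, hsum, hj, X, hXd, hX⟩

theorem XiStarStar.exists_sum_mem_Icc (hε : 0 ≤ ε) (hr : r ≤ 5) (hℓ : XiStarStar ε ℓs ℓ)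
    (S : Finset (Fin r)) (hS : ∑ s ∈ S, ℓs s ∈ Set.Icc a₁ a₂) :
    ∃ I : Finset (Fin j),
      ∑ i ∈ I, ℓ i ∈ Set.Icc (a₁ - ε / 10 ^ 5 / 2) (a₂ + ε / 10 ^ 5 / 2) := by
  obtain ⟨-, -, -, X, hXd, hX⟩ := hℓ
  have hblock := sum_biUnion_mem_Icc (fun s _ t _ hst => hXd s t hst) (fun s _ => hX s)
    (S.card_le_univ.trans (by simpa using hr)) (by positivity : 0 ≤ ε / 10 ^ 100)
  push_cast at hblock
  exact ⟨S.biUnion X, by linarith [hS.1, hblock.1], by linarith [hS.2, hblock.2]⟩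

theorem XiStar.exists_sum_mem_Icc (hε : 0 ≤ ε) (hr : r ≤ 5) (hρ : 0 ≤ ρ)
    (hℓ : XiStar ε ℓs β ℓ) (hℓρ : ∀ i, ℓ i ≤ ρ) (S : Finset (Fin r)) {L H : ℝ}
    (hgap : β + ε / 10 ^ 100 ≤ H - L) (hH : ∑ s ∈ S, ℓs s + 5 * (ε / 10 ^ 100) ≤ H)
    (hL : L ≤ 1 - ρ - ∑ s ∈ Sᶜ, ℓs s - 5 * (ε / 10 ^ 100)) :
    ∃ I : Finset (Fin j), ∑ i ∈ I, ℓ i ∈ Set.Icc L H := by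
  obtain ⟨h01, hsum, -, X, hXd, hX, E, hE, hsmall⟩ := hℓ
  have hblock (S : Finset (Fin r)) := sum_biUnion_mem_Icc (fun s _ t _ hst => hXd s t hst)
    (fun s _ => hX s) (S.card_le_univ.trans (by simpa using hr))
    (by positivity : 0 ≤ ε / 10 ^ 100)
  push_cast at hblock
  have hEρ : ∑ i ∈ E, ℓ i ≤ ρ := by
    calc ∑ i ∈ E, ℓ i ≤ E.card • ρ := sum_le_card_nsmul E ℓ ρ fun i _ => hℓρ i
      _ ≤ 1 • ρ := nsmul_le_nsmul_left hρ hE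
      _ = ρ := one_nsmul ρ
  have hR : ∑ i ∈ Sᶜ.biUnion X ∪ E, ℓ i ≤ ∑ i ∈ Sᶜ.biUnion X, ℓ i + ∑ i ∈ E, ℓ i := by
    linarith [sum_union_inter (s₁ := Sᶜ.biUnion X) (s₂ := E) (f := ℓ),
      sum_nonneg fun i (_ : i ∈ Sᶜ.biUnion X ∩ E) => (h01 i).1]
  refine exists_sum_mem_Icc_of_small_outside (fun i => (h01 i).1) (B := S.biUnion X)
    (R := Sᶜ.biUnion X ∪ E) (fun i hiB hiR => ?_) ?_ ?_
  · simp only [mem_union, mem_biUnion, mem_compl, not_or, not_exists, not_and] at hiB hiR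
    refine (hsmall i (fun s hs => ?_) hiR.2).trans hgap
    by_cases hsS : s ∈ S
    exacts [hiB s hsS hs, hiR.1 s hsS hs]
  · linarith [(hblock S).2]
  · linarith [(hblock Sᶜ).2]

theorem XiStar.exists_sum_mem_Icc_of_split (hε : 0 ≤ ε) (hr : r ≤ 5) (hρ : 0 ≤ ρ)
    (hℓ : XiStar ε ℓs β ℓ) (hℓρ : ∀ i, ℓ i ≤ ρ) (S : Finset (Fin r)) (hβ : β ≤ a₂ - a₁)
    (hS : ∑ s ∈ S, ℓs s ≤ a₂) (hSc : a₁ ≤ 1 - ρ - ∑ s ∈ Sᶜ, ℓs s) :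
    ∃ I : Finset (Fin j),
      ∑ i ∈ I, ℓ i ∈ Set.Icc (a₁ - ε / 10 ^ 5 / 2) (a₂ + ε / 10 ^ 5 / 2) :=
  hℓ.exists_sum_mem_Icc hε hr hρ hℓρ S (by linarith) (by linarith) (by linarith)

theorem XiStar.exists_sum_mem_Icc_of_complement (hε : 0 ≤ ε) (hr : r ≤ 5) (hρ : 0 ≤ ρ)
    (hℓ : XiStar ε ℓs β ℓ) (hℓρ : ∀ i, ℓ i ≤ ρ) (S : Finset (Fin r)) (hβ : β ≤ a₂ - a₁)
    (htot : ∑ s, ℓs s ≤ 1 - ρ - (2 * a₁ - 1))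
    (hS : ∑ s ∈ S, ℓs s ∈ Set.Icc (1 - a₂ - (2 * a₁ - 1)) a₂) :
    ∃ I : Finset (Fin j),
      ∑ i ∈ I, ℓ i ∈ Set.Icc (a₁ - ε / 10 ^ 5 / 2) (a₂ + ε / 10 ^ 5 / 2) := by
  have hSc := sum_compl_add_sum S ℓs
  obtain ⟨hS₁, hS₂⟩ := hS
  by_cases hlarge : 1 - a₁ ≤ ∑ s ∈ S, ℓs s
  · exact hℓ.exists_sum_mem_Icc hε hr hρ hℓρ S (by linarith) (by linarith) (by linarith)
  obtain ⟨I, hI₁, hI₂⟩ := hℓ.exists_sum_mem_Icc hε hr hρ hℓρ S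
    (L := 1 - a₂ - ε / 10 ^ 5 / 2) (H := 1 - a₁ + ε / 10 ^ 5 / 2)
    (by linarith) (by linarith) (by linarith)
  have hI := sum_add_sum_compl I ℓ
  rw [hℓ.2.1] at hI
  exact ⟨Iᶜ, by linarith, by linarith⟩

end Xi

theorem lemma_combinations_general (ε : ℝ) (hε : 0 < ε) (r : ℕ) (hr : r ≤ 5)
    (ℓs : Fin r → ℝ)
    (hmono : ∀ i k : Fin r, i ≤ k → ℓs k ≤ ℓs i)
    (a₁ a₂ ρ b₁ b₂ β : ℝ) (hρ : 0 < ρ)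
    (hb₂ : b₂ ∈ Set.Icc (0 : ℝ) 1) :
    ((((((∑ i, ℓs i) ≤ a₂ ∧ a₁ ≤ 1 - ρ) ∨
        (∃ kk : ℕ, 2 ≤ kk ∧ kk ≤ r ∧
          (∑ i : Fin r, if (i : ℕ) < kk - 1 then ℓs i else 0) ≤ a₂ ∧
          (∀ i : Fin r, (i : ℕ) = kk - 1 → ℓs i ≤ b₁) ∧
          a₁ ≤ 1 - ρ - ((r : ℝ) - (kk : ℝ) + 1) * b₁) ∨
        ((∑ i : Fin r, if 1 ≤ (i : ℕ) then ℓs i else 0) ≤ a₂ ∧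
          (∀ i : Fin r, (i : ℕ) = 0 → ℓs i ≤ b₂) ∧
          a₁ ≤ 1 - ρ - b₂) ∨
        (0.5 + ε / 10 ^ 5 ≤ a₁ ∧
          (∑ i, ℓs i) ≤ 1 - ρ - (2 * a₁ - 1) ∧
          ∃ kk : ℕ, kk ≤ r ∧
            (∑ i : Fin r, if (i : ℕ) < kk then ℓs i else 0) ∈
              Set.Icc (1 - a₂ - (2 * a₁ - 1)) a₂)) ∧
        β ≤ a₂ - a₁) ∨
      (∃ S : Finset (Fin r), (∑ s ∈ S, ℓs s) ∈ Set.Icc a₁ a₂)) →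
      ∀ (j : ℕ) (ℓ : Fin j → ℝ), XiStar ε ℓs β ℓ → (∀ i, ℓ i ≤ ρ) →
        ∃ Iχ : Finset (Fin j),
          (∑ i ∈ Iχ, ℓ i) ∈ Set.Icc (a₁ - ε / 10 ^ 5 / 2) (a₂ + ε / 10 ^ 5 / 2)) ∧
    ((∃ S : Finset (Fin r), (∑ s ∈ S, ℓs s) ∈ Set.Icc a₁ a₂) →
      ∀ (j : ℕ) (ℓ : Fin j → ℝ), XiStarStar ε ℓs ℓ →
        ∃ Iχ : Finset (Fin j),
          (∑ i ∈ Iχ, ℓ i) ∈ Set.Icc (a₁ - ε / 10 ^ 5 / 2) (a₂ + ε / 10 ^ 5 / 2)) := by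
  refine ⟨?_, fun ⟨S, hS⟩ j ℓ hℓ => hℓ.exists_sum_mem_Icc hε.le hr S hS⟩
  rintro (⟨⟨hA, hA'⟩ | ⟨k, hk, hkr, hpre, hb, hB⟩ | ⟨hsuf, hb, hC⟩ | ⟨-, htot, k, -, hpre⟩, hβ⟩ |
    ⟨S, hS⟩) j ℓ hℓ hℓρ
  · exact hℓ.exists_sum_mem_Icc_of_split hε.le hr hρ.le hℓρ univ hβ hA (by simpa using hA')
  · have htail := sum_compl_filter_lt_le hmono (by omega) hkr hb
    exact hℓ.exists_sum_mem_Icc_of_split hε.le hr hρ.le hℓρ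
      (univ.filter fun i => (i : ℕ) < k - 1) hβ (by rwa [sum_filter]) (by linarith)
  · have hhead := sum_compl_filter_one_le_le hb₂.1 hb
    exact hℓ.exists_sum_mem_Icc_of_split hε.le hr hρ.le hℓρ
      (univ.filter fun i => 1 ≤ (i : ℕ)) hβ (by rwa [sum_filter]) (by linarith)
  · exact hℓ.exists_sum_mem_Icc_of_complement hε.le hr hρ.le hℓρ
      (univ.filter fun i => (i : ℕ) < k) hβ htot (by rwa [sum_filter])
  · exact hℓ.xiStarStar.exists_sum_mem_Icc hε.le hr S hS

/-- **Lemma 6.1: combinations.**  With `ε₁ = ε/10⁵`, `χ = [a₁−ε₁/2, a₂+ε₁/2] ⊆ [0,1]`: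
under one of the conditions (A)–(E) (with the extra assumption `a₂ − a₁ ≥ β` for (A)–(D)),
every `{ℓᵢ} ∈ Ξ⋆(ℓ*₁,…,ℓ*_r,β)` with all `ℓᵢ ≤ ρ` has a subset summing into `χ`;
alternatively, under condition (E), every `{ℓᵢ} ∈ Ξ⋆⋆(ℓ*₁,…,ℓ*_r)` has a subset summing
into `χ`. -/
theorem lemma_combinations (ε : ℝ) (hε : 0 < ε) (r : ℕ) (hr : r ≤ 5)
    (ℓs : Fin r → ℝ)
    (hℓrange : ∀ i, 0.01 ≤ ℓs i ∧ ℓs i ≤ 0.5 + ε / 10 ^ 5)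
    (hmono : ∀ i k : Fin r, i ≤ k → ℓs k ≤ ℓs i)
    (a₁ a₂ ρ b₁ b₂ β : ℝ) (hρ : 0 < ρ)
    (hb₁ : b₁ ∈ Set.Icc (0 : ℝ) 1) (hb₂ : b₂ ∈ Set.Icc (0 : ℝ) 1)
    (hχ₀ : 0 ≤ a₁ - ε / 10 ^ 5 / 2) (hχ₁ : a₂ + ε / 10 ^ 5 / 2 ≤ 1) :
    ((((((∑ i, ℓs i) ≤ a₂ ∧ a₁ ≤ 1 - ρ) ∨
        (∃ kk : ℕ, 2 ≤ kk ∧ kk ≤ r ∧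
          (∑ i : Fin r, if (i : ℕ) < kk - 1 then ℓs i else 0) ≤ a₂ ∧
          (∀ i : Fin r, (i : ℕ) = kk - 1 → ℓs i ≤ b₁) ∧
          a₁ ≤ 1 - ρ - ((r : ℝ) - (kk : ℝ) + 1) * b₁) ∨
        ((∑ i : Fin r, if 1 ≤ (i : ℕ) then ℓs i else 0) ≤ a₂ ∧
          (∀ i : Fin r, (i : ℕ) = 0 → ℓs i ≤ b₂) ∧
          a₁ ≤ 1 - ρ - b₂) ∨
        (0.5 + ε / 10 ^ 5 ≤ a₁ ∧
          (∑ i, ℓs i) ≤ 1 - ρ - (2 * a₁ - 1) ∧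
          ∃ kk : ℕ, kk ≤ r ∧
            (∑ i : Fin r, if (i : ℕ) < kk then ℓs i else 0) ∈
              Set.Icc (1 - a₂ - (2 * a₁ - 1)) a₂)) ∧
        β ≤ a₂ - a₁) ∨
      (∃ S : Finset (Fin r), (∑ s ∈ S, ℓs s) ∈ Set.Icc a₁ a₂)) →
      ∀ (j : ℕ) (ℓ : Fin j → ℝ), XiStar ε ℓs β ℓ → (∀ i, ℓ i ≤ ρ) →
        ∃ Iχ : Finset (Fin j),
          (∑ i ∈ Iχ, ℓ i) ∈ Set.Icc (a₁ - ε / 10 ^ 5 / 2) (a₂ + ε / 10 ^ 5 / 2)) ∧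
    ((∃ S : Finset (Fin r), (∑ s ∈ S, ℓs s) ∈ Set.Icc a₁ a₂) →
      ∀ (j : ℕ) (ℓ : Fin j → ℝ), XiStarStar ε ℓs ℓ →
        ∃ Iχ : Finset (Fin j),
          (∑ i ∈ Iχ, ℓ i) ∈ Set.Icc (a₁ - ε / 10 ^ 5 / 2) (a₂ + ε / 10 ^ 5 / 2)) :=
  lemma_combinations_general ε hε r hr ℓs hmono a₁ a₂ ρ b₁ b₂ β hρ hb₂
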